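/- arXiv:1111.5970 — 2 statements merged into one kernel-verified Lean document; each statement's English description precedes it below -/
import Mathlib

section
/- (Strong ordering / strong comparison principle) Let S be a local energy of range r with the strong twist condition: ∂_i∂_j S_i(x) ≤ -λ < 0 for all j in {i+1,...,i+r}, and ∂_j∂_k S_i ≡ 0 whenever j ≠ i, k ≠ i, j ≠ k. Let B = [i0-r, i1] be a segment of Z with interior B̊ = [i0, i1], and let x, y be sequences solving the recurrence Σ_{j=i-r}^{i} ∂_i S_j(z) = 0 for all i in B̊. If x_i ≤ y_i for all i in the closure [i0-r, i1+r] and x ≠ y on that closure, then x_i < y_i strictly for all i in B̊. -/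
open Finset Filter Topology

noncomputable def d1 (f : ℝ → ℝ → ℝ) (ν μ : ℝ) : ℝ := deriv (fun t => f t μ) ν
noncomputable def d2 (f : ℝ → ℝ → ℝ) (ν μ : ℝ) : ℝ := deriv (fun t => f ν t) μ
noncomputable def d11 (f : ℝ → ℝ → ℝ) (ν μ : ℝ) : ℝ := deriv (fun t => d1 f t μ) ν
noncomputable def d12 (f : ℝ → ℝ → ℝ) (ν μ : ℝ) : ℝ := deriv (fun t => d2 f t μ) ν
noncomputable def d22 (f : ℝ → ℝ → ℝ) (ν μ : ℝ) : ℝ := deriv (fun t => d2 f ν t) μ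

/-- The local energy at site `i` of the sequence `z`:  `S_i(z) = ∑_{j=1}^r f_j(z_i, z_{i+j})`. -/
noncomputable def siteE (r : ℕ) (f : ℕ → ℝ → ℝ → ℝ) (z : ℤ → ℝ) (i : ℤ) : ℝ :=
  ∑ j ∈ Finset.Icc 1 r, f j (z i) (z (i + j))

/-- `W_B` for the segment `B = [a,b] ⊂ ℤ`. -/
noncomputable def Wseg (r : ℕ) (f : ℕ → ℝ → ℝ → ℝ) (a b : ℤ) (z : ℤ → ℝ) : ℝ :=
  ∑ i ∈ Finset.Icc a b, siteE r f z i

/-- A global minimizer: for every segment with interior `[a,b]` and every variation `v`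
supported in `[a,b]`, the energy does not decrease. -/
def IsGlobalMin (r : ℕ) (f : ℕ → ℝ → ℝ → ℝ) (x : ℤ → ℝ) : Prop :=
  ∀ a b : ℤ, ∀ v : ℤ → ℝ, (∀ i, v i ≠ 0 → i ∈ Finset.Icc a b) →
    Wseg r f (a - r) b x ≤ Wseg r f (a - r) b (x + v)

/-- The variational monotone recurrence relation `∑_{j=i-r}^{i} ∂_i S_j(x) = 0` at site `i`. -/
def SolvesEL (r : ℕ) (f : ℕ → ℝ → ℝ → ℝ) (x : ℤ → ℝ) (i : ℤ) : Prop :=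
  (∑ j ∈ Finset.Icc 1 r, (d1 (f j) (x i) (x (i + j)) + d2 (f j) (x (i - j)) (x i))) = 0

/-- A local energy of range `r` in the sense of Definition 1.5 of the paper. -/
structure LocalEnergy (r : ℕ) (K lam : ℝ) where
  f : ℕ → ℝ → ℝ → ℝ
  smooth : ∀ j, ContDiff ℝ 2 (fun p : ℝ × ℝ => f j p.1 p.2)
  periodic : ∀ j ν μ, f j (ν + 1) (μ + 1) = f j ν μ
  bound11 : ∀ j ν μ, |d11 (f j) ν μ| ≤ K / r
  bound12 : ∀ j ν μ, |d12 (f j) ν μ| ≤ K / r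
  bound22 : ∀ j ν μ, |d22 (f j) ν μ| ≤ K / r
  coercive : ∀ j ∈ Finset.Icc 1 r, ∀ C : ℝ, ∃ R : ℝ, ∀ ν μ : ℝ, R ≤ |ν - μ| → C ≤ f j ν μ
  twist : ∀ j ∈ Finset.Icc 1 r, ∀ ν μ : ℝ, d12 (f j) ν μ ≤ -lam

/-- `x` and `y` are weakly ordered on the set `s`. -/
def WOrd (x y : ℤ → ℝ) (s : Set ℤ) : Prop :=
  (∀ i ∈ s, x i ≤ y i) ∨ (∀ i ∈ s, y i ≤ x i)

/-- `D` is an interval outside of which (on both components of the complement)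
`x` and `y` are weakly ordered. -/
def CrossProp (x y : ℤ → ℝ) (D : Set ℤ) : Prop :=
  D.OrdConnected ∧ WOrd x y {i | ∀ j ∈ D, i < j} ∧ WOrd x y {i | ∀ j ∈ D, j < i}

/-- The domain of crossing of `x` and `y`: the minimal interval `D` such that `x` and `y`
are weakly ordered on the connected components of its complement. -/
def IsCrossingDomain (x y : ℤ → ℝ) (D : Set ℤ) : Prop :=
  CrossProp x y D ∧ ∀ D' : Set ℤ, CrossProp x y D' → D ⊆ D'

/-- The translation `(τ_{k,l} x)_i = x_{i-k} + l`. -/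
def transl (k l : ℤ) (x : ℤ → ℝ) : ℤ → ℝ := fun i => x (i - k) + l

/-- The Birkhoff property. -/
def Birkhoff (x : ℤ → ℝ) : Prop :=
  ∀ k l : ℤ, (∀ i, transl k l x i ≤ x i) ∨ (∀ i, x i ≤ transl k l x i)

/-
If `x ≤ y` near an interior site `i` with `x i = y i`, subtract the two recurrences at `i`. By the
twist condition `∂₁f_j(ν, ·)` and `∂₂f_j(·, μ)` decrease at rate at least `lam`, so the `j`-th
summand of the difference is at least `lam ((y - x)(i + j) + (y - x)(i - j)) ≥ 0`. The summands
add up to `0`, hence `x = y` on the whole window `[i - r, i + r]`. As `r ≥ 1`, the equality spreads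
through the interior and then to the closure, contradicting `x ≠ y` there.
-/

section SecondDerivatives

variable {g : ℝ → ℝ → ℝ}

lemma d1_eq_fderiv (hg : Differentiable ℝ (Function.uncurry g)) (ν μ : ℝ) :
    d1 g ν μ = fderiv ℝ (Function.uncurry g) (ν, μ) (1, 0) := by
  have h := (hg (ν, μ)).hasFDerivAt.comp_hasDerivAt ν
    ((hasDerivAt_id' ν).prodMk (hasDerivAt_const ν μ))
  exact h.deriv

lemma d2_eq_fderiv (hg : Differentiable ℝ (Function.uncurry g)) (ν μ : ℝ) :
    d2 g ν μ = fderiv ℝ (Function.uncurry g) (ν, μ) (0, 1) := by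
  have h := (hg (ν, μ)).hasFDerivAt.comp_hasDerivAt μ
    ((hasDerivAt_const μ ν).prodMk (hasDerivAt_id' μ))
  exact h.deriv

variable (hg : ContDiff ℝ 2 (Function.uncurry g))
include hg

lemma hasDerivAt_fderiv_apply_left (ν μ : ℝ) (v : ℝ × ℝ) :
    HasDerivAt (fun t => fderiv ℝ (Function.uncurry g) (t, μ) v)
      (fderiv ℝ (fderiv ℝ (Function.uncurry g)) (ν, μ) (1, 0) v) ν := by
  have hG := (hg.fderiv_right (m := 1) le_rfl).differentiable one_ne_zero (ν, μ)
  have h : HasDerivAt (fun t => fderiv ℝ (Function.uncurry g) (t, μ))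
      (fderiv ℝ (fderiv ℝ (Function.uncurry g)) (ν, μ) (1, 0)) ν :=
    hG.hasFDerivAt.comp_hasDerivAt ν ((hasDerivAt_id ν).prodMk (hasDerivAt_const ν μ))
  simpa using h.clm_apply (hasDerivAt_const ν v)

lemma hasDerivAt_fderiv_apply_right (ν μ : ℝ) (v : ℝ × ℝ) :
    HasDerivAt (fun t => fderiv ℝ (Function.uncurry g) (ν, t) v)
      (fderiv ℝ (fderiv ℝ (Function.uncurry g)) (ν, μ) (0, 1) v) μ := by
  have hG := (hg.fderiv_right (m := 1) le_rfl).differentiable one_ne_zero (ν, μ)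
  have h : HasDerivAt (fun t => fderiv ℝ (Function.uncurry g) (ν, t))
      (fderiv ℝ (fderiv ℝ (Function.uncurry g)) (ν, μ) (0, 1)) μ :=
    hG.hasFDerivAt.comp_hasDerivAt μ ((hasDerivAt_const μ ν).prodMk (hasDerivAt_id μ))
  simpa using h.clm_apply (hasDerivAt_const μ v)

lemma hasDerivAt_d2_left (ν μ : ℝ) :
    HasDerivAt (fun t => d2 g t μ)
      (fderiv ℝ (fderiv ℝ (Function.uncurry g)) (ν, μ) (1, 0) (0, 1)) ν := by
  simpa only [d2_eq_fderiv (hg.differentiable two_ne_zero)] using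
    hasDerivAt_fderiv_apply_left hg ν μ (0, 1)

lemma d12_eq_fderiv (ν μ : ℝ) :
    d12 g ν μ = fderiv ℝ (fderiv ℝ (Function.uncurry g)) (ν, μ) (1, 0) (0, 1) :=
  (hasDerivAt_d2_left hg ν μ).deriv

-- Schwarz: the mixed second derivatives of a `C²` function commute.
lemma hasDerivAt_d1_right (ν μ : ℝ) :
    HasDerivAt (fun t => d1 g ν t) (d12 g ν μ) μ := by
  rw [d12_eq_fderiv hg, (hg.contDiffAt (x := (ν, μ))).isSymmSndFDerivAt (by simp)]
  simpa only [d1_eq_fderiv (hg.differentiable two_ne_zero)] using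
    hasDerivAt_fderiv_apply_right hg ν μ (1, 0)

variable {lam : ℝ} (htwist : ∀ ν μ, d12 g ν μ ≤ -lam)
include htwist

lemma mul_sub_le_d1_sub_d1 (ν : ℝ) {a b : ℝ} (hab : a ≤ b) :
    lam * (b - a) ≤ d1 g ν a - d1 g ν b := by
  have h := image_sub_le_mul_sub_of_deriv_le
    (fun t => (hasDerivAt_d1_right hg ν t).differentiableAt)
    (fun t => (hasDerivAt_d1_right hg ν t).deriv ▸ htwist ν t) hab
  linarith

lemma mul_sub_le_d2_sub_d2 (μ : ℝ) {a b : ℝ} (hab : a ≤ b) :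
    lam * (b - a) ≤ d2 g a μ - d2 g b μ := by
  have h := image_sub_le_mul_sub_of_deriv_le
    (fun t => (hasDerivAt_d2_left hg t μ).differentiableAt)
    (fun t => htwist t μ) hab
  linarith

end SecondDerivatives

lemma Int.forall_mem_Icc_of_forall_add_sub {P : ℤ → Prop} {i : ℤ} {r : ℕ} (h0 : P i)
    (h : ∀ j ∈ Icc 1 r, P (i + j) ∧ P (i - j)) : ∀ k ∈ Icc (i - r) (i + r), P k := by
  intro k hk
  rw [mem_Icc] at hk
  rcases lt_trichotomy k i with hlt | rfl | hgt
  · obtain ⟨j, hj⟩ := Int.eq_ofNat_of_zero_le (sub_nonneg.2 hlt.le)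
    simpa [show i - j = k by omega] using (h j (mem_Icc.2 ⟨by omega, by omega⟩)).2
  · exact h0
  · obtain ⟨j, hj⟩ := Int.eq_ofNat_of_zero_le (sub_nonneg.2 hgt.le)
    simpa [show i + j = k by omega] using (h j (mem_Icc.2 ⟨by omega, by omega⟩)).1

lemma Int.forall_mem_Icc_of_forall_succ_pred {P : ℤ → Prop} {a b i : ℤ} (hi : i ∈ Icc a b)
    (hP : P i) (hstep : ∀ k ∈ Icc a b, P k → P (k + 1) ∧ P (k - 1)) :
    ∀ k ∈ Icc a b, P k := by
  intro k hk
  rw [mem_Icc] at hi hk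
  revert hk
  rcases le_total i k with hik | hki
  · induction k, hik using Int.leInduction with
    | base => exact fun _ => hP
    | succ n hin ih =>
      exact fun hk => (hstep n (mem_Icc.2 ⟨by omega, by omega⟩) (ih ⟨by omega, by omega⟩)).1
  · induction k, hki using Int.leInductionDown with
    | base => exact fun _ => hP
    | pred n hni ih =>
      exact fun hk => (hstep n (mem_Icc.2 ⟨by omega, by omega⟩) (ih ⟨by omega, by omega⟩)).2

lemma eqOn_window_of_solvesEL {r : ℕ} {lam : ℝ} (hlam : 0 < lam) {f : ℕ → ℝ → ℝ → ℝ}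
    (hsmooth : ∀ j ∈ Icc 1 r, ContDiff ℝ 2 (Function.uncurry (f j)))
    (htwist : ∀ j ∈ Icc 1 r, ∀ ν μ : ℝ, d12 (f j) ν μ ≤ -lam) {x y : ℤ → ℝ} {i : ℤ}
    (hx : SolvesEL r f x i) (hy : SolvesEL r f y i)
    (hle : ∀ k ∈ Icc (i - r) (i + r), x k ≤ y k) (heq : x i = y i) :
    ∀ k ∈ Icc (i - r) (i + r), x k = y k := by
  set D : ℕ → ℝ := fun j => (d1 (f j) (x i) (x (i + j)) + d2 (f j) (x (i - j)) (x i)) -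
    (d1 (f j) (y i) (y (i + j)) + d2 (f j) (y (i - j)) (y i))
  have hle' : ∀ j ∈ Icc 1 r, x (i + j) ≤ y (i + j) ∧ x (i - j) ≤ y (i - j) := fun j hj => by
    rw [mem_Icc] at hj
    exact ⟨hle _ (mem_Icc.2 ⟨by omega, by omega⟩), hle _ (mem_Icc.2 ⟨by omega, by omega⟩)⟩
  have hD : ∀ j ∈ Icc 1 r,
      lam * ((y (i + j) - x (i + j)) + (y (i - j) - x (i - j))) ≤ D j := fun j hj => by
    have h1 := mul_sub_le_d1_sub_d1 (hsmooth j hj) (htwist j hj) (x i) (hle' j hj).1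
    have h2 := mul_sub_le_d2_sub_d2 (hsmooth j hj) (htwist j hj) (x i) (hle' j hj).2
    simp only [D, ← heq]
    linarith
  have hD_nonneg : ∀ j ∈ Icc 1 r, 0 ≤ D j := fun j hj =>
    (mul_nonneg hlam.le (by linarith [hle' j hj])).trans (hD j hj)
  have hD_sum : ∑ j ∈ Icc 1 r, D j = 0 := by
    rw [sum_sub_distrib, hx, hy, sub_self]
  have hD_zero := (sum_eq_zero_iff_of_nonneg hD_nonneg).1 hD_sum
  refine Int.forall_mem_Icc_of_forall_add_sub heq fun j hj => ?_
  have := hD j hj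
  rw [hD_zero j hj] at this
  obtain ⟨hup, hdown⟩ := hle' j hj
  constructor <;> nlinarith

theorem stmt4_general (r : ℕ) (hr : 1 ≤ r) (lam : ℝ) (hlam : 0 < lam)
    (f : ℕ → ℝ → ℝ → ℝ)
    (hsmooth : ∀ j, ContDiff ℝ 2 (fun p : ℝ × ℝ => f j p.1 p.2))
    (htwist : ∀ j ∈ Finset.Icc 1 r, ∀ ν μ : ℝ, d12 (f j) ν μ ≤ -lam)
    (i0 i1 : ℤ) (x y : ℤ → ℝ)
    (hELx : ∀ i ∈ Finset.Icc i0 i1, SolvesEL r f x i)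
    (hELy : ∀ i ∈ Finset.Icc i0 i1, SolvesEL r f y i)
    (hord : ∀ i ∈ Finset.Icc (i0 - r) (i1 + r), x i ≤ y i)
    (hne : ∃ i ∈ Finset.Icc (i0 - (r:ℤ)) (i1 + r), x i ≠ y i) :
    ∀ i ∈ Finset.Icc i0 i1, x i < y i := by
  have hwindow_sub : ∀ k ∈ Icc i0 i1, Icc (k - r) (k + r) ⊆ Icc (i0 - r) (i1 + r) :=
    fun k hk => by
      rw [mem_Icc] at hk
      exact Icc_subset_Icc (by omega) (by omega)
  have hwindow : ∀ k ∈ Icc i0 i1, x k = y k → ∀ m ∈ Icc (k - r) (k + r), x m = y m :=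
    fun k hk => eqOn_window_of_solvesEL hlam (fun j _ => hsmooth j) htwist (hELx k hk)
      (hELy k hk) fun m hm => hord m (hwindow_sub k hk hm)
  intro i hi
  refine (hord i (hwindow_sub i hi (by simp))).lt_of_ne fun heq => ?_
  have hinterior : ∀ k ∈ Icc i0 i1, x k = y k :=
    Int.forall_mem_Icc_of_forall_succ_pred hi heq fun k hk hxy =>
      ⟨hwindow k hk hxy _ (mem_Icc.2 ⟨by omega, by omega⟩),
        hwindow k hk hxy _ (mem_Icc.2 ⟨by omega, by omega⟩)⟩
  obtain ⟨w, hw, hxy⟩ := hne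
  rw [mem_Icc] at hi hw
  have hc : max i0 (min w i1) ∈ Icc i0 i1 := mem_Icc.2 ⟨by omega, by omega⟩
  exact hxy (hwindow _ hc (hinterior _ hc) w (mem_Icc.2 ⟨by omega, by omega⟩))

/-- Strong ordering (strong comparison) principle:  if `x` and `y` solve the recurrence
relation on the interior `[i0,i1]` of the segment `B = [i0-r,i1]`, `x ≤ y` on the closure
`[i0-r, i1+r]` and `x ≠ y` there, then `x < y` strictly on the interior. -/
theorem stmt4 (r : ℕ) (hr : 1 ≤ r) (lam : ℝ) (hlam : 0 < lam)
    (f : ℕ → ℝ → ℝ → ℝ)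
    (hsmooth : ∀ j, ContDiff ℝ 2 (fun p : ℝ × ℝ => f j p.1 p.2))
    (htwist : ∀ j ∈ Finset.Icc 1 r, ∀ ν μ : ℝ, d12 (f j) ν μ ≤ -lam)
    (i0 i1 : ℤ) (h01 : i0 ≤ i1) (x y : ℤ → ℝ)
    (hELx : ∀ i ∈ Finset.Icc i0 i1, SolvesEL r f x i)
    (hELy : ∀ i ∈ Finset.Icc i0 i1, SolvesEL r f y i)
    (hord : ∀ i ∈ Finset.Icc (i0 - r) (i1 + r), x i ≤ y i)
    (hne : ∃ i ∈ Finset.Icc (i0 - (r:ℤ)) (i1 + r), x i ≠ y i) :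
    ∀ i ∈ Finset.Icc i0 i1, x i < y i :=
  stmt4_general r hr lam hlam f hsmooth htwist i0 i1 x y hELx hELy hord hne
end

section
/- If the domain of crossing D = [j0, j1] of two global minimizers x, y is nonempty and bounded, then there is no interval I ⊂ [j0 - r + 1, j1 + r - 1] of length r on which α ≡ 0, and none on which β ≡ 0, where α_i = max(y_i - x_i, 0), β_i = min(y_i - x_i, 0). -/
/-!
Suppose `y ≤ x` on a window `I` of `r` consecutive sites, i.e. `α ≡ 0` there. On the sites
between `I` and `j1` replace `x` by `x ⊔ y` and `y` by `x ⊓ y` (beyond `j1`, `y ≤ x` already).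
Since the interaction has range `r`, the window `I` separates these sites from the rest of the
chain, so the submodularity of the energy (the lattice form of the twist condition) bounds the
sum of the new energies by the old one; as `y` is a minimizer, the modified `x` costs no more
than `x` and is again a global minimizer. It coincides with `x` beyond `j1`, and the twist lets
the Euler–Lagrange recurrence be solved backwards, so it is `x`. Hence `y ≤ x` on the whole
half-line starting at `I`, and `x, y` are ordered on both sides of the half-line ending before
`I`, which therefore contains the domain of crossing `[j0, j1]`: impossible. The case `β ≡ 0` is
the mirror image, modifying `y` to the left of `I`.
-/

open Finset Filter Topology

section Energy

variable {r : ℕ} {f : ℕ → ℝ → ℝ → ℝ}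

theorem siteE_congr {z z' : ℤ → ℝ} {i : ℤ} (h : Set.EqOn z z' (Set.Icc i (i + r))) :
    siteE r f z i = siteE r f z' i :=
  Finset.sum_congr rfl fun j hj => by
    have hj := Finset.mem_Icc.1 hj
    rw [h ⟨le_rfl, by omega⟩, h ⟨by omega, by omega⟩]

theorem Wseg_congr {z z' : ℤ → ℝ} {a b : ℤ} (h : Set.EqOn z z' (Set.Icc a (b + r))) :
    Wseg r f a b z = Wseg r f a b z' :=
  Finset.sum_congr rfl fun i hi => by
    have hi := Finset.mem_Icc.1 hi
    exact siteE_congr fun k hk => h ⟨by grind, by grind⟩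

/-- Only the sites whose interaction window meets `[a, b]` feel a change of `z` on `[a, b]`. -/
theorem Wseg_sub_Wseg_eq_of_le {z z' : ℤ → ℝ} {a b A B : ℤ} (hA : A ≤ a) (hB : b ≤ B)
    (h : ∀ k, z' k ≠ z k → k ∈ Set.Icc a b) :
    Wseg r f (A - r) B z' - Wseg r f (A - r) B z =
      Wseg r f (a - r) b z' - Wseg r f (a - r) b z := by
  simp only [Wseg, ← Finset.sum_sub_distrib]
  refine (Finset.sum_subset (Finset.Icc_subset_Icc (by omega) hB) fun i _ hi => ?_).symm
  rw [Finset.mem_Icc] at hi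
  rw [siteE_congr fun k hk => ?_, sub_self]
  by_contra hne
  have := h k hne
  grind

theorem IsGlobalMin.Wseg_le {x z : ℤ → ℝ} (hx : IsGlobalMin r f x) {a b : ℤ}
    (h : ∀ k, z k ≠ x k → k ∈ Set.Icc a b) :
    Wseg r f (a - r) b x ≤ Wseg r f (a - r) b z := by
  simpa using hx a b (z - x) fun k hk => Finset.mem_Icc.2 (h k (sub_ne_zero.1 hk))

theorem IsGlobalMin.of_Wseg_le {x z : ℤ → ℝ} (hx : IsGlobalMin r f x) {a b : ℤ}
    (h : ∀ k, z k ≠ x k → k ∈ Set.Icc a b) (hle : Wseg r f (a - r) b z ≤ Wseg r f (a - r) b x) :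
    IsGlobalMin r f z := by
  intro a' b' v hv
  have hvz : ∀ k, (z + v) k ≠ z k → k ∈ Set.Icc a' b' := fun k hk =>
    Finset.mem_Icc.1 (hv k fun h0 => hk (by simp [h0]))
  have hvx : ∀ k, (z + v) k ≠ x k → k ∈ Set.Icc (min a a') (max b b') := by
    intro k hk
    by_cases hzk : z k = x k
    · have := hvz k (hzk ▸ hk)
      exact ⟨by grind, by grind⟩
    · have := h k hzk
      exact ⟨by grind, by grind⟩
  have hmin := hx.Wseg_le hvx
  have hzx := Wseg_sub_Wseg_eq_of_le (r := r) (f := f) (min_le_left a a') (le_max_left b b') h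
  have hvz' := Wseg_sub_Wseg_eq_of_le (r := r) (f := f) (min_le_right a a') (le_max_right b b') hvz
  linarith

end Energy

namespace LocalEnergy

variable {r : ℕ} {K lam : ℝ} (E : LocalEnergy r K lam)

theorem differentiable_right (j : ℕ) (ν : ℝ) : Differentiable ℝ (E.f j ν) :=
  ((E.smooth j).differentiable two_ne_zero).comp ((differentiable_const ν).prodMk differentiable_id)

theorem strictAnti_d2 (hlam : 0 < lam) {j : ℕ} (hj : j ∈ Finset.Icc 1 r) (μ : ℝ) :
    StrictAnti fun ν => d2 (E.f j) ν μ :=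
  strictAnti_of_deriv_neg fun ν => (E.twist j hj ν μ).trans_lt (neg_neg_of_pos hlam)

theorem f_cross_le (hlam : 0 < lam) {j : ℕ} (hj : j ∈ Finset.Icc 1 r) {P Q S T : ℝ}
    (hQP : Q ≤ P) (hST : S ≤ T) : E.f j P T + E.f j Q S ≤ E.f j P S + E.f j Q T := by
  have hdiff := (E.differentiable_right j P).sub (E.differentiable_right j Q)
  have hanti : Antitone (E.f j P - E.f j Q) :=
    antitone_of_deriv_nonpos hdiff fun μ => by
      rw [deriv_sub (E.differentiable_right j P μ) (E.differentiable_right j Q μ), sub_nonpos]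
      exact (E.strictAnti_d2 hlam hj μ).antitone hQP
  have := hanti hST
  simp only [Pi.sub_apply] at this
  linarith

theorem f_sup_add_f_inf_le (hlam : 0 < lam) {j : ℕ} (hj : j ∈ Finset.Icc 1 r) (P Q S T : ℝ) :
    E.f j (P ⊔ Q) (S ⊔ T) + E.f j (P ⊓ Q) (S ⊓ T) ≤ E.f j P S + E.f j Q T := by
  rcases le_total Q P with hQP | hPQ <;> rcases le_total S T with hST | hTS
  · rw [sup_of_le_left hQP, inf_of_le_right hQP, sup_of_le_right hST, inf_of_le_left hST]
    exact E.f_cross_le hlam hj hQP hST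
  · rw [sup_of_le_left hQP, inf_of_le_right hQP, sup_of_le_left hTS, inf_of_le_right hTS]
  · rw [sup_of_le_right hPQ, inf_of_le_left hPQ, sup_of_le_right hST, inf_of_le_left hST, add_comm]
  · rw [sup_of_le_right hPQ, inf_of_le_left hPQ, sup_of_le_left hTS, inf_of_le_right hTS]
    linarith [E.f_cross_le hlam hj hPQ hTS]

theorem Wseg_sup_add_Wseg_inf_le (hlam : 0 < lam) (a b : ℤ) (p q : ℤ → ℝ) :
    Wseg r E.f a b (p ⊔ q) + Wseg r E.f a b (p ⊓ q) ≤ Wseg r E.f a b p + Wseg r E.f a b q := by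
  simp only [Wseg, siteE, ← Finset.sum_add_distrib, Pi.sup_apply, Pi.inf_apply]
  exact Finset.sum_le_sum fun i _ => Finset.sum_le_sum fun j hj => E.f_sup_add_f_inf_le hlam hj ..

theorem hasDerivAt_f_line (j : ℕ) (ν μ c₁ c₂ : ℝ) :
    HasDerivAt (fun t => E.f j (ν + t * c₁) (μ + t * c₂))
      (c₁ * d1 (E.f j) ν μ + c₂ * d2 (E.f j) ν μ) 0 := by
  set F : ℝ × ℝ → ℝ := fun p => E.f j p.1 p.2
  set L := fderiv ℝ F (ν, μ)
  have hchain : ∀ (g : ℝ → ℝ × ℝ) (v : ℝ × ℝ) (s : ℝ), g s = (ν, μ) → HasDerivAt g v s →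
      HasDerivAt (F ∘ g) (L v) s := fun g v s hs hg =>
    ((E.smooth j).differentiable two_ne_zero (ν, μ)).hasFDerivAt.comp_hasDerivAt_of_eq s hg hs.symm
  have h1 : d1 (E.f j) ν μ = L (1, 0) :=
    (hchain (fun t => (t, μ)) _ ν rfl ((hasDerivAt_id ν).prodMk (hasDerivAt_const ν μ))).deriv
  have h2 : d2 (E.f j) ν μ = L (0, 1) :=
    (hchain (fun t => (ν, t)) _ μ rfl ((hasDerivAt_const μ ν).prodMk (hasDerivAt_id μ))).deriv
  have hline : HasDerivAt (fun t : ℝ => (ν + t * c₁, μ + t * c₂)) (c₁, c₂) 0 := by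
    simpa using (((hasDerivAt_id (0 : ℝ)).mul_const c₁).const_add ν).prodMk
      (((hasDerivAt_id (0 : ℝ)).mul_const c₂).const_add μ)
  have hL : L (c₁, c₂) = c₁ * L (1, 0) + c₂ * L (0, 1) := by
    rw [← smul_eq_mul, ← smul_eq_mul, ← map_smul, ← map_smul, ← map_add]
    simp
  rw [h1, h2, ← hL]
  exact hchain _ _ 0 (by simp) hline

theorem solvesEL_of_isGlobalMin {x : ℤ → ℝ} (hx : IsGlobalMin r E.f x) (i : ℤ) :
    SolvesEL r E.f x i := by
  classical
  set e : ℤ → ℝ := Pi.single i 1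
  set g : ℝ → ℝ := fun t => Wseg r E.f (i - r) i (x + t • e)
  have hmin : IsLocalMin g 0 := Filter.Eventually.of_forall fun t => by
    refine (hx.Wseg_le fun k hk => ?_).trans_eq' (by simp [g])
    by_contra hki
    exact hk (by simp [e, show k ≠ i by simpa using hki])
  have hderiv : HasDerivAt g (∑ k ∈ Finset.Icc (i - r) i, ∑ j ∈ Finset.Icc 1 r,
      (e k * d1 (E.f j) (x k) (x (k + j)) + e (k + j) * d2 (E.f j) (x k) (x (k + j)))) 0 :=
    HasDerivAt.fun_sum fun k _ => HasDerivAt.fun_sum fun j _ => E.hasDerivAt_f_line j _ _ _ _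
  have hzero := hmin.hasDerivAt_eq_zero hderiv
  rw [Finset.sum_comm] at hzero
  rw [SolvesEL, ← hzero]
  refine Finset.sum_congr rfl fun j hj => ?_
  have hj := Finset.mem_Icc.1 hj
  have hiff : ∀ k : ℤ, k + j = i ↔ k = i - j := fun k => by omega
  simp only [e, Pi.single_apply, ite_mul, one_mul, zero_mul, Finset.sum_add_distrib, hiff,
    Finset.sum_ite_eq', Finset.mem_Icc, sub_add_cancel]
  rw [if_pos (by omega), if_pos (by omega)]

/-- The twist lets the recurrence be solved backwards: at site `i + r` the only term involving
site `i` is `d2 (f r) (z i) (z (i + r))`, which is strictly monotone in `z i`. -/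
theorem eq_of_solvesEL_of_eq_of_lt (hlam : 0 < lam) (hr : 1 ≤ r) {z w : ℤ → ℝ} {i : ℤ}
    (hz : SolvesEL r E.f z (i + r)) (hw : SolvesEL r E.f w (i + r))
    (h : ∀ k, i < k → z k = w k) : z i = w i := by
  have hrmem : r ∈ Finset.Icc 1 r := Finset.mem_Icc.2 ⟨hr, le_rfl⟩
  set T : (ℤ → ℝ) → ℕ → ℝ := fun u j =>
    d1 (E.f j) (u (i + r)) (u (i + r + j)) + d2 (E.f j) (u (i + r - j)) (u (i + r))
  have hrest : ∑ j ∈ (Finset.Icc 1 r).erase r, T z j = ∑ j ∈ (Finset.Icc 1 r).erase r, T w j :=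
    Finset.sum_congr rfl fun j hj => by
      obtain ⟨hjr, hj⟩ := Finset.mem_erase.1 hj
      have hj := Finset.mem_Icc.1 hj
      simp only [T]
      rw [h _ (by omega), h _ (by omega), h (i + r - j) (by omega)]
  have hTr : T z r = T w r := by
    rw [SolvesEL, ← Finset.add_sum_erase _ _ hrmem] at hz hw
    linarith
  have hd2 : d2 (E.f r) (z i) (w (i + r)) = d2 (E.f r) (w i) (w (i + r)) := by
    simp only [T, add_sub_cancel_right, h (i + r) (by omega), h (i + r + r) (by omega)] at hTr
    linarith
  exact (E.strictAnti_d2 hlam hrmem _).injective hd2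

theorem eq_of_solvesEL_of_eqOn_Ici (hlam : 0 < lam) (hr : 1 ≤ r) {z w : ℤ → ℝ}
    (hz : ∀ i, SolvesEL r E.f z i) (hw : ∀ i, SolvesEL r E.f w i) {c : ℤ}
    (h : ∀ k, c ≤ k → z k = w k) : z = w := by
  have key : ∀ n ≤ c, ∀ k, n ≤ k → z k = w k := fun n hn =>
    Int.leInductionDown (motive := fun n _ => ∀ k, n ≤ k → z k = w k) h
      (fun n _ ih k hk => by
        rcases lt_or_eq_of_le hk with hk | rfl
        · exact ih k (by omega)
        · exact E.eq_of_solvesEL_of_eq_of_lt hlam hr (hz _) (hw _) fun k hk => ih k (by omega))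
      n hn
  funext k
  exact key (min k c) (min_le_right k c) k (min_le_left k c)

theorem le_of_le_on_collars (hlam : 0 < lam) (hr : 1 ≤ r) {p q : ℤ → ℝ}
    (hp : IsGlobalMin r E.f p) (hq : IsGlobalMin r E.f q) {c d : ℤ}
    (hcollar : ∀ k ∈ Set.Icc (c - r) (d + r), k ∉ Set.Icc c d → q k ≤ p k) :
    ∀ k ∈ Set.Icc c d, q k ≤ p k := by
  classical
  set p' : ℤ → ℝ := fun k => if k ∈ Set.Icc c d then p k ⊔ q k else p k
  set q' : ℤ → ℝ := fun k => if k ∈ Set.Icc c d then p k ⊓ q k else q k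
  have hp'_supp : ∀ k, p' k ≠ p k → k ∈ Set.Icc c d := fun k hk =>
    by_contra fun h => hk (if_neg h)
  have hq'_supp : ∀ k, q' k ≠ q k → k ∈ Set.Icc c d := fun k hk =>
    by_contra fun h => hk (if_neg h)
  have hp'_eq : Set.EqOn p' (p ⊔ q) (Set.Icc (c - r) (d + r)) := fun k hk => by
    by_cases h : k ∈ Set.Icc c d
    · exact if_pos h
    · exact (if_neg h).trans (sup_of_le_left (hcollar k hk h)).symm
  have hq'_eq : Set.EqOn q' (p ⊓ q) (Set.Icc (c - r) (d + r)) := fun k hk => by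
    by_cases h : k ∈ Set.Icc c d
    · exact if_pos h
    · exact (if_neg h).trans (inf_of_le_right (hcollar k hk h)).symm
  have hsub := E.Wseg_sup_add_Wseg_inf_le hlam (c - r) d p q
  rw [← Wseg_congr hp'_eq, ← Wseg_congr hq'_eq] at hsub
  have hp' : IsGlobalMin r E.f p' := hp.of_Wseg_le hp'_supp (by linarith [hq.Wseg_le hq'_supp])
  have hpp : p' = p := E.eq_of_solvesEL_of_eqOn_Ici hlam hr (E.solvesEL_of_isGlobalMin hp')
    (E.solvesEL_of_isGlobalMin hp) (c := d + 1) fun k hk => by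
      by_contra h
      have := hp'_supp k h
      grind
  intro k hk
  exact sup_eq_left.1 ((if_pos hk).symm.trans (congrFun hpp k))

end LocalEnergy

theorem WOrd.mono {x y : ℤ → ℝ} {s t : Set ℤ} (h : WOrd x y t) (hst : s ⊆ t) : WOrd x y s :=
  h.imp (fun h i hi => h i (hst hi)) fun h i hi => h i (hst hi)

theorem crossProp_Iic {x y : ℤ → ℝ} {b : ℤ} (h : WOrd x y (Set.Ioi b)) :
    CrossProp x y (Set.Iic b) :=
  ⟨Set.ordConnected_Iic,
    h.mono fun i hi => absurd (hi (min i b) (min_le_right i b)) (min_le_left i b).not_gt,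
    h.mono fun _ hi => hi b Set.self_mem_Iic⟩

theorem crossProp_Ici {x y : ℤ → ℝ} {a : ℤ} (h : WOrd x y (Set.Iio a)) :
    CrossProp x y (Set.Ici a) :=
  ⟨Set.ordConnected_Ici, h.mono fun _ hi => hi a Set.self_mem_Ici,
    h.mono fun i hi => absurd (hi (max i a) (le_max_right i a)) (le_max_left i a).not_gt⟩

theorem stmt12_general (r : ℕ) (hr : 1 ≤ r) (K lam : ℝ) (hlam : 0 < lam)
    (E : LocalEnergy r K lam) (x y : ℤ → ℝ)
    (hx : IsGlobalMin r E.f x) (hy : IsGlobalMin r E.f y)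
    (j0 j1 : ℤ) (hj : j0 ≤ j1)
    (hD : IsCrossingDomain x y (Set.Icc j0 j1))
    (hleft : ∀ i : ℤ, i < j0 → x i ≤ y i)
    (hright : ∀ i : ℤ, j1 < i → y i ≤ x i)
    (α β : ℤ → ℝ)
    (hα : ∀ i, α i = max (y i - x i) 0) (hβ : ∀ i, β i = min (y i - x i) 0) :
    ∀ a : ℤ, Set.Icc a (a + (r : ℤ) - 1) ⊆ Set.Icc (j0 - r + 1) (j1 + r - 1) →
      (∃ i ∈ Set.Icc a (a + (r : ℤ) - 1), α i ≠ 0) ∧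
      (∃ i ∈ Set.Icc a (a + (r : ℤ) - 1), β i ≠ 0) := by
  intro a hsub
  have ha := (hsub ⟨by omega, le_rfl⟩).2
  have hb := (hsub ⟨le_rfl, by omega⟩).1
  constructor
  · by_contra! hα0
    have hband : ∀ i ∈ Set.Icc a (a + r - 1), y i ≤ x i := fun i hi =>
      sub_nonpos.1 (max_eq_right_iff.1 (hα i ▸ hα0 i hi))
    have hmid := E.le_of_le_on_collars hlam hr hx hy (c := a + r) (d := j1) fun k hk hk' =>
      if h : k < a + r then hband k ⟨by grind, by omega⟩ else hright k (by grind)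
    have hcross : CrossProp x y (Set.Iic (a - 1)) := crossProp_Iic <| Or.inr fun i hi =>
      if h : i < a + r then hband i ⟨by grind, by omega⟩
      else if h' : i ≤ j1 then hmid i ⟨by omega, h'⟩ else hright i (by omega)
    have := Set.mem_Iic.1 (hD.2 _ hcross ⟨hj, le_rfl⟩)
    omega
  · by_contra! hβ0
    have hband : ∀ i ∈ Set.Icc a (a + r - 1), x i ≤ y i := fun i hi =>
      sub_nonneg.1 (min_eq_right_iff.1 (hβ i ▸ hβ0 i hi))
    have hmid := E.le_of_le_on_collars hlam hr hy hx (c := j0) (d := a - 1) fun k hk hk' =>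
      if h : k < j0 then hleft k h else hband k ⟨by grind, by grind⟩
    have hcross : CrossProp x y (Set.Ici (a + r)) := crossProp_Ici <| Or.inl fun i hi =>
      if h : i < j0 then hleft i h
      else if h' : i < a then hmid i ⟨by omega, by omega⟩ else hband i ⟨by omega, by grind⟩
    have := Set.mem_Ici.1 (hD.2 _ hcross ⟨le_rfl, hj⟩)
    omega

/-- If the domain of crossing `D = [j0,j1]` of two global minimizers is nonempty and
bounded (normalized so that `x ≤ y` to the left of `j0` and `x ≥ y` to the right of `j1`),
then every subinterval of `[j0-r+1, j1+r-1]` of length `r` contains a site where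
`α = max(y - x, 0)` does not vanish and a site where `β = min(y - x, 0)` does not vanish. -/
theorem stmt12 (r : ℕ) (hr : 1 ≤ r) (K lam : ℝ) (hK : 0 < K) (hlam : 0 < lam)
    (E : LocalEnergy r K lam) (x y : ℤ → ℝ)
    (hx : IsGlobalMin r E.f x) (hy : IsGlobalMin r E.f y)
    (j0 j1 : ℤ) (hj : j0 ≤ j1)
    (hD : IsCrossingDomain x y (Set.Icc j0 j1))
    (hleft : ∀ i : ℤ, i < j0 → x i ≤ y i)
    (hright : ∀ i : ℤ, j1 < i → y i ≤ x i)
    (α β : ℤ → ℝ)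
    (hα : ∀ i, α i = max (y i - x i) 0) (hβ : ∀ i, β i = min (y i - x i) 0) :
    ∀ a : ℤ, Set.Icc a (a + (r : ℤ) - 1) ⊆ Set.Icc (j0 - r + 1) (j1 + r - 1) →
      (∃ i ∈ Set.Icc a (a + (r : ℤ) - 1), α i ≠ 0) ∧
      (∃ i ∈ Set.Icc a (a + (r : ℤ) - 1), β i ≠ 0) :=
  stmt12_general r hr K lam hlam E x y hx hy j0 j1 hj hD hleft hright α β hα hβ
end
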